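/- arXiv:1303.0787 — 9 statements merged into one kernel-verified Lean document; each statement's English description precedes it below -/
import Mathlib

section
/- For any voting rule F, the iterative voting process using the M1 restricted manipulation move converges after at most n steps, where n is the number of voters. -/
/-- A ballot is a strict linear order over `m` candidates, identified with a
ranking: `b c` is the position of candidate `c` (position `0` is the top). -/
abbrev Ballot (m : ℕ) := Fin m ≃ Fin m

/-- A profile assigns a ballot to each of the `n` voters. -/
abbrev Profile (n m : ℕ) := Fin n → Ballot m

/-- In ballot `b`, candidate `c` is ranked strictly above candidate `c'`. -/
abbrev Prefers {m : ℕ} (b : Ballot m) (c c' : Fin m) : Prop := b c < b c'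

/-- Move candidate `c` to the top of ballot `b`: every candidate ranked above
`c` is shifted down by one position, and all other candidates keep their
positions. -/
def moveToTop {m : ℕ} (b : Ballot m) (c : Fin m) : Ballot m :=
  b.trans (Fin.cycleRange (b c))

/-- The top-ranked candidate of a ballot. -/
def topCand {m : ℕ} (hm : 0 < m) (b : Ballot m) : Fin m := b.symm ⟨0, hm⟩

/-- The second-ranked candidate of a ballot. -/
def secondCand {m : ℕ} (hm : 2 ≤ m) (b : Ballot m) : Fin m := b.symm ⟨1, by omega⟩

/-- An M1 manipulation move by voter `i`, with respect to the voting rule `F`,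
the truthful profile `truthful`, the current profile `p` and the resulting
profile `p'`: voter `i` has not manipulated yet (her ballot is still truthful,
so she manipulates at most once), the current winner `F p` is neither her
truthful best nor truthful second-best candidate, she moves her truthful
second-best candidate to the top of her ballot, and the winner changes in her
favor (w.r.t. her truthful preference). -/
def M1Move {n m : ℕ} (hm : 2 ≤ m) (F : Profile n m → Fin m)
    (truthful p p' : Profile n m) (i : Fin n) : Prop :=
  p i = truthful i ∧
  F p ≠ topCand (by omega) (truthful i) ∧
  F p ≠ secondCand hm (truthful i) ∧
  p' = Function.update p i (moveToTop (p i) (secondCand hm (truthful i))) ∧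
  F p' ≠ F p ∧
  Prefers (truthful i) (F p') (F p)

lemma moved_ne {m : ℕ} (hm : 2 ≤ m) (b : Ballot m) :
    moveToTop b (secondCand hm b) ≠ b := by
  obtain ⟨m', rfl⟩ : ∃ m', m = m' + 1 := ⟨m - 1, by omega⟩
  intro h
  have h1 : (moveToTop b (secondCand hm b)) (secondCand hm b) = b (secondCand hm b) :=
    congrArg (· (secondCand hm b)) h
  have h2 : b (secondCand hm b) = ⟨1, by omega⟩ := b.apply_symm_apply _
  simp only [moveToTop, Equiv.trans_apply, h2, Fin.cycleRange_self] at h1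
  have := congrArg Fin.val h1
  simp at this

/-- For any voting rule `F`, the iterative voting process using
the M1 restricted manipulation move converges after at most `n` steps, where
`n` is the number of voters: any sequence of legal M1 moves starting from the
truthful profile has length at most `n`. -/
theorem m1_converges_after_at_most_n_steps {n m : ℕ} (hm : 2 ≤ m)
    (F : Profile n m → Fin m) (truthful : Profile n m)
    (K : ℕ) (p : ℕ → Profile n m) (mover : ℕ → Fin n)
    (h0 : p 0 = truthful)
    (hstep : ∀ k, k < K → M1Move hm F truthful (p k) (p (k+1)) (mover k)) :
    K ≤ n := by
  -- after voter `mover k` moves at step k, her ballot is forever non-truthful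
  have key : ∀ k, k < K → ∀ k', k < k' → k' ≤ K →
      p k' (mover k) = moveToTop (truthful (mover k)) (secondCand hm (truthful (mover k))) := by
    intro k hk k' hk' hK
    induction k' with
    | zero => omega
    | succ j ih =>
      rcases Nat.lt_or_ge k j with hkj | hkj
      · obtain ⟨heq, _, _, hupd, _, _⟩ := hstep j (by omega)
        have hprev := ih hkj (by omega)
        by_cases hij : mover j = mover k
        · rw [hij] at heq
          rw [hprev] at heq
          exact absurd heq (moved_ne hm _)
        · rw [hupd, Function.update_of_ne (by exact fun h => hij h.symm)]
          exact hprev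
      · have : k = j := by omega
        subst this
        obtain ⟨heq, _, _, hupd, _, _⟩ := hstep k (by omega)
        rw [hupd, Function.update_self, heq]
  -- movers are injective on Fin K
  have main : ∀ a b : Fin K, (a : ℕ) < (b : ℕ) → mover a ≠ mover b := by
    intro a b hab' hab
    obtain ⟨heq, _, _, _, _, _⟩ := hstep b b.isLt
    have := key a (by omega) b hab' (le_of_lt b.isLt)
    rw [hab] at this
    rw [this] at heq
    exact moved_ne hm _ heq
  have hinj : Function.Injective (fun i : Fin K => mover i) := by
    intro a b hab
    have hab : mover a = mover b := hab
    rcases lt_trichotomy (a : ℕ) (b : ℕ) with h | h | h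
    · exact absurd hab (main a b h)
    · exact Fin.ext h
    · exact absurd hab.symm (main b a h)
  calc K = Fintype.card (Fin K) := (Fintype.card_fin K).symm
    _ ≤ Fintype.card (Fin n) := Fintype.card_le_of_injective _ hinj
    _ = n := Fintype.card_fin n
end

section
/- For any positional scoring rule F, the iterative voting process using the M2 restricted manipulation move converges: the score of the current winner (paired lexicographically with its tie-breaking rank) strictly increases at each manipulation step, and since scores are bounded, the process terminates. -/
/-- An M2 manipulation move by voter `i`, with respect to the voting rule `F`,
the truthful profile `truthful`, the current profile `p` and the resulting
profile `p'`: voter `i` moves to the top of her current ballot a candidate `c`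
ranked above the current winner `F p` in her current ballot, which she
truthfully prefers to `F p`, which thereby becomes the new winner, and which is
her truthfully most preferred candidate among those with these properties. -/
def M2Move {n m : ℕ} (F : Profile n m → Fin m)
    (truthful p p' : Profile n m) (i : Fin n) : Prop :=
  ∃ c : Fin m,
    Prefers (p i) c (F p) ∧
    Prefers (truthful i) c (F p) ∧
    p' = Function.update p i (moveToTop (p i) c) ∧
    F p' = c ∧
    (∀ c' : Fin m, Prefers (p i) c' (F p) → Prefers (truthful i) c' (F p) →
      F (Function.update p i (moveToTop (p i) c')) = c' →
      c' = c ∨ Prefers (truthful i) c c')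

/-- The total score of candidate `c` in profile `p` under the positional
scoring rule with scoring vector `s` (position `j` is worth `s j` points). -/
def score {n m : ℕ} (s : Fin m → ℕ) (p : Profile n m) (c : Fin m) : ℕ :=
  ∑ i, s (p i c)

/-- `w` is the winner of profile `p` under the positional scoring rule with
scoring vector `s`: every other candidate has a strictly smaller score, or an
equal score and a smaller tie-breaking rank (the fixed tie-breaking linear
order on candidates is the natural order on `Fin m`). -/
def PSRWinner {n m : ℕ} (s : Fin m → ℕ) (p : Profile n m) (w : Fin m) : Prop :=
  ∀ c : Fin m, score s p c < score s p w ∨ (score s p c = score s p w ∧ c ≤ w)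

lemma cycleRange_of_gt' {N : ℕ} {i j : Fin N} (h : i < j) : Fin.cycleRange i j = j := by
  cases N with
  | zero => exact j.elim0
  | succ k => exact Fin.cycleRange_of_gt h

/-- For any positional scoring rule `F`, the iterative voting
process with the M2 move converges: the pair (score of the current winner,
tie-breaking rank of the current winner) strictly increases lexicographically
at each manipulation step, and since scores are bounded there is no
infinite sequence of M2 manipulation steps. -/
theorem psr_m2_converges {n m : ℕ} (s : Fin m → ℕ)
    (hs : Antitone s) (hs' : ∃ j k : Fin m, s k < s j)
    (F : Profile n m → Fin m) (hF : ∀ p, PSRWinner s p (F p)) :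
    (∀ (truthful p p' : Profile n m) (i : Fin n),
        M2Move F truthful p p' i →
        score s p (F p) < score s p' (F p') ∨
          (score s p (F p) = score s p' (F p') ∧ F p < F p')) ∧
    (∀ (truthful : Profile n m) (p : ℕ → Profile n m) (mover : ℕ → Fin n),
        p 0 = truthful →
        (∀ k, M2Move F truthful (p k) (p (k+1)) (mover k)) → False) := by

  obtain ⟨j0, k0, hjk⟩ := hs'
  have hm : 0 < m := j0.pos
  have key : ∀ (truthful p p' : Profile n m) (i : Fin n),
      M2Move F truthful p p' i →
      score s p (F p) < score s p' (F p') ∨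
        (score s p (F p) = score s p' (F p') ∧ F p < F p') := by
    rintro truthful p p' i ⟨c, h1, h2, h3, h4, -⟩
    have hne : F p ≠ c := by
      rintro rfl
      exact absurd h1 (lt_irrefl _)
    have hscore : score s p' (F p) = score s p (F p) := by
      unfold score
      apply Finset.sum_congr rfl
      intro j _
      subst h3
      rcases eq_or_ne j i with rfl | hj
      · simp [moveToTop, cycleRange_of_gt' (show (p j) c < (p j) (F p) from h1)]
      · simp [Function.update_of_ne hj]
    rcases hF p' (F p) with h | ⟨h, h'⟩
    · left; rw [← hscore]; exact h
    · right
      refine ⟨by rw [← hscore]; exact h, ?_⟩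
      rw [h4] at h' ⊢
      exact lt_of_le_of_ne h' hne
  refine ⟨key, ?_⟩
  intro truthful p mover h0 hstep
  set s0 : ℕ := s ⟨0, hm⟩ with hs0
  have hbound : ∀ (q : Profile n m) (c : Fin m), score s q c ≤ n * s0 := by
    intro q c
    calc score s q c ≤ ∑ _i : Fin n, s0 := by
          apply Finset.sum_le_sum
          intro j _
          exact hs (by exact Fin.mk_le_of_le_val (Nat.zero_le _))
      _ = n * s0 := by simp [Finset.sum_const, mul_comm]
  set f : ℕ → ℕ := fun k => score s (p k) (F (p k)) * m + (F (p k)).val with hf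
  have hmono : StrictMono f := by
    apply strictMono_nat_of_lt_succ
    intro k
    rcases key truthful (p k) (p (k+1)) (mover k) (hstep k) with h | ⟨h, h'⟩
    · have hv : (F (p k)).val < m := (F (p k)).isLt
      have : (score s (p k) (F (p k)) + 1) * m ≤ score s (p (k+1)) (F (p (k+1))) * m :=
        Nat.mul_le_mul_right _ h
      simp only [hf]
      nlinarith [(F (p (k+1))).val.zero_le]
    · simp only [hf, h]
      omega
  have hfb : ∀ k, f k < n * s0 * m + m := by
    intro k
    have h1 := hbound (p k) (F (p k))
    have h2 : (F (p k)).val < m := (F (p k)).isLt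
    simp only [hf]
    nlinarith
  have := hmono.le_apply (x := n * s0 * m + m)
  have := hfb (n * s0 * m + m)
  omega
end

section
/- Under the M2 manipulation move, the relative pairwise comparison (majority margin) between the current winner w and every other candidate is unchanged by the manipulation; consequently the iterative version of the Copeland rule converges. -/
/-- The number of voters ranking candidate `a` above candidate `b`. -/
def numPrefer {n m : ℕ} (p : Profile n m) (a b : Fin m) : ℕ :=
  (Finset.univ.filter (fun i => Prefers (p i) a b)).card

/-- A strict majority of voters rank `a` above `b`. -/
abbrev Beats {n m : ℕ} (p : Profile n m) (a b : Fin m) : Prop :=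
  n < 2 * numPrefer p a b

/-- The Copeland score of candidate `c`: the number of candidates that `c`
beats in a pairwise majority contest minus the number of candidates beating
`c`. -/
def copelandScore {n m : ℕ} (p : Profile n m) (c : Fin m) : ℤ :=
  ((Finset.univ.filter (fun a => Beats p c a)).card : ℤ) -
    ((Finset.univ.filter (fun a => Beats p a c)).card : ℤ)

/-- `w` is the Copeland winner of `p`: every other candidate has a strictly
smaller Copeland score, or an equal score and a smaller tie-breaking rank
(tie-breaking by the natural order on `Fin m`). -/
def CopelandWinner {n m : ℕ} (p : Profile n m) (w : Fin m) : Prop :=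
  ∀ c : Fin m, copelandScore p c < copelandScore p w ∨
    (copelandScore p c = copelandScore p w ∧ c ≤ w)


lemma cycleRange_lt_iff {m : ℕ} (r u v : Fin m) (h : r < u) :
    (Fin.cycleRange r v < Fin.cycleRange r u ↔ v < u) ∧
    (Fin.cycleRange r u < Fin.cycleRange r v ↔ u < v) := by
  cases m with
  | zero => exact r.elim0
  | succ M =>
    rw [Fin.cycleRange_of_gt h]
    have hrval : (r : ℕ) < (u : ℕ) := h
    rcases lt_trichotomy v r with hv | hv | hv
    · rw [Fin.cycleRange_of_lt hv]
      have hval : ((v + 1 : Fin (M+1)) : ℕ) = (v : ℕ) + 1 := by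
        apply Fin.val_add_one_of_lt
        exact lt_of_lt_of_le (hv.trans h) (Fin.le_last u)
      have hvval : (v : ℕ) < (r : ℕ) := hv
      simp only [Fin.lt_def, hval]
      omega
    · subst hv
      rw [Fin.cycleRange_self]
      simp only [Fin.lt_def, Fin.val_zero]
      omega
    · rw [Fin.cycleRange_of_gt hv]
      exact ⟨Iff.rfl, Iff.rfl⟩

lemma prefers_moveToTop {m : ℕ} (b : Ballot m) (c w : Fin m)
    (h : Prefers b c w) (a : Fin m) :
    (Prefers (moveToTop b c) w a ↔ Prefers b w a) ∧
    (Prefers (moveToTop b c) a w ↔ Prefers b a w) := by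
  have := cycleRange_lt_iff (b c) (b w) (b a) h
  exact ⟨this.2, this.1⟩

lemma numPrefer_update_eq {n m : ℕ} (p : Profile n m) (i : Fin n) (b' : Ballot m)
    (x y : Fin m) (h : Prefers b' x y ↔ Prefers (p i) x y) :
    numPrefer (Function.update p i b') x y = numPrefer p x y := by
  unfold numPrefer
  congr 1
  apply Finset.filter_congr
  intro j _
  by_cases hj : j = i
  · subst hj; simp only [Function.update_self]; exact iff_of_eq (by simpa using h)
  · simp [Function.update_of_ne hj]

lemma margins_preserved {n m : ℕ} (F : Profile n m → Fin m)
    (truthful p p' : Profile n m) (i : Fin n) (hM : M2Move F truthful p p' i) :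
    ∀ a : Fin m, numPrefer p' (F p) a = numPrefer p (F p) a ∧
      numPrefer p' a (F p) = numPrefer p a (F p) := by
  obtain ⟨c, hc, -, hp', -, -⟩ := hM
  subst hp'
  intro a
  have h := prefers_moveToTop (p i) c (F p) hc a
  exact ⟨numPrefer_update_eq p i _ _ _ h.1, numPrefer_update_eq p i _ _ _ h.2⟩

lemma score_preserved {n m : ℕ} (F : Profile n m → Fin m)
    (truthful p p' : Profile n m) (i : Fin n) (hM : M2Move F truthful p p' i) :
    copelandScore p' (F p) = copelandScore p (F p) := by
  have hm := margins_preserved F truthful p p' i hM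
  unfold copelandScore
  have h1 : ∀ a : Fin m, Beats p' (F p) a ↔ Beats p (F p) a := by
    intro a; unfold Beats; rw [(hm a).1]
  have h2 : ∀ a : Fin m, Beats p' a (F p) ↔ Beats p a (F p) := by
    intro a; unfold Beats; rw [(hm a).2]
  have e1 : (Finset.univ.filter (fun a => Beats p' (F p) a)) =
      (Finset.univ.filter (fun a => Beats p (F p) a)) :=
    Finset.filter_congr (fun a _ => by simpa using h1 a)
  have e2 : (Finset.univ.filter (fun a => Beats p' a (F p))) =
      (Finset.univ.filter (fun a => Beats p a (F p))) :=
    Finset.filter_congr (fun a _ => by simpa using h2 a)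
  rw [e1, e2]

lemma score_bound {n m : ℕ} (p : Profile n m) (c : Fin m) :
    copelandScore p c ≤ m := by
  unfold copelandScore
  have h1 : (Finset.univ.filter (fun a => Beats p c a)).card ≤ m := by
    simpa using (Finset.card_filter_le Finset.univ (fun a => Beats p c a))
  have h2 : (0 : ℤ) ≤ ((Finset.univ.filter (fun a => Beats p a c)).card : ℤ) :=
    Int.natCast_nonneg _
  have := Int.ofNat_le.mpr h1
  omega

/-- Under the M2 manipulation move, the pairwise majority margins
between the current winner `w = F p` and every other candidate are unchanged by
the manipulation; consequently the iterative version of the Copeland rule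
converges (there is no infinite sequence of M2 manipulation steps). -/
theorem copeland_m2_margins_preserved_and_converges {n m : ℕ}
    (F : Profile n m → Fin m) (hF : ∀ p, CopelandWinner p (F p)) :
    (∀ (truthful p p' : Profile n m) (i : Fin n),
        M2Move F truthful p p' i →
        ∀ a : Fin m, numPrefer p' (F p) a = numPrefer p (F p) a ∧
          numPrefer p' a (F p) = numPrefer p a (F p)) ∧
    (∀ (truthful : Profile n m) (p : ℕ → Profile n m) (mover : ℕ → Fin n),
        p 0 = truthful →
        (∀ k, M2Move F truthful (p k) (p (k+1)) (mover k)) → False) := by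
  constructor
  · intro truthful p p' i hM a
    exact margins_preserved F truthful p p' i hM a
  · intro truthful p mover hp0 hstep
    set g : ℕ → ℤ := fun k => copelandScore (p k) (F (p k)) * m + ((F (p k) : ℕ) : ℤ)
      with hg
    have hmono : ∀ k, g k + 1 ≤ g (k + 1) := by
      intro k
      obtain ⟨c, hc1, -, -, hwin, -⟩ := hstep k
      have hscore : copelandScore (p (k+1)) (F (p k)) = copelandScore (p k) (F (p k)) :=
        score_preserved F truthful (p k) (p (k+1)) (mover k) (hstep k)
      have hcw : c ≠ F (p k) := by
        intro h; rw [h] at hc1; exact lt_irrefl _ hc1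
      have hwinner := hF (p (k+1)) (F (p k))
      have hvalw : ((F (p k) : ℕ) : ℤ) < m := by
        exact_mod_cast (F (p k)).isLt
      have hvalc : (0 : ℤ) ≤ ((F (p (k+1)) : ℕ) : ℤ) := Int.natCast_nonneg _
      simp only [hg]
      rcases hwinner with hlt | ⟨heq, hle⟩
      · rw [hscore] at hlt
        have h1 : (copelandScore (p k) (F (p k)) + 1) * m ≤
            copelandScore (p (k+1)) (F (p (k+1))) * m := by
          apply mul_le_mul_of_nonneg_right _ (by positivity)
          omega
        nlinarith
      · rw [hscore] at heq
        have hlt2 : F (p k) < F (p (k+1)) := by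
          rcases lt_or_eq_of_le hle with h | h
          · exact h
          · exact absurd (by rw [hwin] at h; exact h.symm) hcw
        have : ((F (p k) : ℕ) : ℤ) + 1 ≤ ((F (p (k+1)) : ℕ) : ℤ) := by
          exact_mod_cast hlt2
        rw [heq]
        linarith
    have hlb : ∀ k, g 0 + k ≤ g k := by
      intro k
      induction k with
      | zero => simp
      | succ k ih =>
        have := hmono k
        push_cast
        push_cast at ih
        omega
    have hub : ∀ k, g k ≤ m * m + m := by
      intro k
      have h1 : copelandScore (p k) (F (p k)) ≤ m := score_bound _ _
      have h2 : ((F (p k) : ℕ) : ℤ) ≤ m := by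
        exact_mod_cast le_of_lt (F (p k)).isLt
      simp only [hg]
      nlinarith [show (0:ℤ) ≤ m by positivity]
    set K : ℕ := (m * m + m - g 0).toNat + 1 with hK
    have h1 := hlb K
    have h2 := hub K
    have h3 : (m * m + m - g 0 : ℤ) ≤ ((m * m + m - g 0).toNat : ℤ) := Int.self_le_toNat _
    have h4 : ((K : ℕ) : ℤ) = ((m * m + m - g 0).toNat : ℤ) + 1 := by
      simp [hK]
    omega
end

section
/- Under the M2 manipulation move, the Maximin score of the current winner w is unchanged by the manipulation, and therefore the iterative version of the Maximin rule converges. -/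
/-- The Maximin score of candidate `c`: the minimum, over all other candidates
`a`, of the number of voters ranking `c` above `a`. -/
def maximinScore {n m : ℕ} (hm : 2 ≤ m) (p : Profile n m) (c : Fin m) : ℕ :=
  Finset.inf' (Finset.univ.erase c)
    (by
      obtain ⟨a, ha⟩ := Fintype.exists_ne_of_one_lt_card
        (by simp only [Fintype.card_fin]; omega) c
      exact ⟨a, Finset.mem_erase.mpr ⟨ha, Finset.mem_univ a⟩⟩)
    (fun a => numPrefer p c a)

/-- `w` is the Maximin winner of `p`: every other candidate has a strictly
smaller Maximin score, or an equal score and a smaller tie-breaking rank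
(tie-breaking by the natural order on `Fin m`). -/
def MaximinWinner {n m : ℕ} (hm : 2 ≤ m) (p : Profile n m) (w : Fin m) : Prop :=
  ∀ c : Fin m, maximinScore hm p c < maximinScore hm p w ∨
    (maximinScore hm p c = maximinScore hm p w ∧ c ≤ w)

lemma prefers_moveToTop_iff {m : ℕ} (b : Ballot m) (c w a : Fin m)
    (h : b c < b w) : Prefers (moveToTop b c) w a ↔ Prefers b w a := by
  obtain ⟨m, rfl⟩ : ∃ k, m = k + 1 := by
    cases m with
    | zero => exact (b c).elim0
    | succ k => exact ⟨k, rfl⟩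
  unfold moveToTop Prefers
  simp only [Equiv.trans_apply]
  rw [Fin.cycleRange_of_gt h]
  rcases lt_trichotomy (b c) (b a) with hca | hca | hca
  · rw [Fin.cycleRange_of_gt hca]
  · rw [← hca, Fin.cycleRange_self]
    constructor
    · intro hlt; exact absurd hlt (by simp [Fin.lt_def])
    · intro hlt; exact absurd (hca ▸ hlt) (lt_asymm h)
  · rw [Fin.cycleRange_of_lt hca]
    have h1 : ((b a : Fin (m+1)) + 1 : Fin (m+1)).val = (b a).val + 1 :=
      Fin.val_add_one_of_lt (lt_of_lt_of_le hca (Fin.le_last _))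
    have hc := Fin.lt_def.mp hca
    have hw := Fin.lt_def.mp h
    simp only [Fin.lt_def, h1]
    omega

lemma numPrefer_update {n m : ℕ} (p : Profile n m) (i : Fin n) (c w a : Fin m)
    (h : Prefers (p i) c w) :
    numPrefer (Function.update p i (moveToTop (p i) c)) w a = numPrefer p w a := by
  unfold numPrefer
  congr 1
  apply Finset.filter_congr
  intro j _
  rcases eq_or_ne j i with rfl | hj
  · simp only [Function.update_self]
    simp [prefers_moveToTop_iff (p j) c w a h]
  · simp [Function.update_of_ne hj]

lemma score_update {n m : ℕ} (hm : 2 ≤ m) (p : Profile n m) (i : Fin n) (c w : Fin m)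
    (h : Prefers (p i) c w) :
    maximinScore hm (Function.update p i (moveToTop (p i) c)) w = maximinScore hm p w := by
  unfold maximinScore
  apply Finset.inf'_congr _ rfl
  intro a _
  exact numPrefer_update p i c w a h

lemma score_le {n m : ℕ} (hm : 2 ≤ m) (p : Profile n m) (c : Fin m) :
    maximinScore hm p c ≤ n := by
  unfold maximinScore
  obtain ⟨a, ha⟩ := Fintype.exists_ne_of_one_lt_card
    (by simp only [Fintype.card_fin]; omega) c
  refine le_trans (Finset.inf'_le _ (Finset.mem_erase.mpr ⟨ha, Finset.mem_univ a⟩)) ?_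
  calc (Finset.univ.filter (fun i => Prefers (p i) c a)).card
      ≤ (Finset.univ : Finset (Fin n)).card := Finset.card_filter_le _ _
    _ = n := by simp

/-- Under the M2 manipulation move, the Maximin score of the
current winner `w = F p` is unchanged by the manipulation, and therefore the
iterative version of the Maximin rule converges (there is no infinite sequence
of M2 manipulation steps). -/
theorem maximin_m2_score_preserved_and_converges {n m : ℕ} (hm : 2 ≤ m)
    (F : Profile n m → Fin m) (hF : ∀ p, MaximinWinner hm p (F p)) :
    (∀ (truthful p p' : Profile n m) (i : Fin n),
        M2Move F truthful p p' i →
        maximinScore hm p' (F p) = maximinScore hm p (F p)) ∧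
    (∀ (truthful : Profile n m) (p : ℕ → Profile n m) (mover : ℕ → Fin n),
        p 0 = truthful →
        (∀ k, M2Move F truthful (p k) (p (k+1)) (mover k)) → False) := by
  have part1 : ∀ (truthful p p' : Profile n m) (i : Fin n),
      M2Move F truthful p p' i →
      maximinScore hm p' (F p) = maximinScore hm p (F p) := by
    intro truthful p p' i hmove
    obtain ⟨c, hc1, _, hp', _, _⟩ := hmove
    rw [hp']
    exact score_update hm p i c (F p) hc1
  refine ⟨part1, ?_⟩
  intro truthful p mover _ hstep
  set g : ℕ → ℕ := fun k => m * maximinScore hm (p k) (F (p k)) + (F (p k)).val with hg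
  have hmono : StrictMono g := by
    apply strictMono_nat_of_lt_succ
    intro k
    obtain ⟨c, hc1, _, hp', hFc, _⟩ := hstep k
    have hscore : maximinScore hm (p (k+1)) (F (p k)) = maximinScore hm (p k) (F (p k)) :=
      part1 truthful (p k) (p (k+1)) (mover k) (hstep k)
    have hne : F (p (k+1)) ≠ F (p k) := by
      rw [hFc]; intro heq; rw [heq] at hc1; exact lt_irrefl _ hc1
    have hwin := hF (p (k+1)) (F (p k))
    simp only [hg]
    rcases hwin with hlt | ⟨heq, hle⟩
    · rw [hscore] at hlt
      have h1 : (F (p k)).val < m := (F (p k)).2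
      have h2 : (F (p (k+1))).val < m := (F (p (k+1))).2
      nlinarith
    · rw [hscore] at heq
      rw [heq]
      have : (F (p k)).val < (F (p (k+1))).val :=
        lt_of_le_of_ne hle (fun h => hne (Fin.ext h.symm))
      omega
  have hbound : ∀ k, g k ≤ m * n + m := by
    intro k
    simp only [hg]
    have h1 := score_le hm (p k) (F (p k))
    have h2 : (F (p k)).val < m := (F (p k)).2
    nlinarith
  have := hmono.le_apply (x := m * n + m + 1)
  have := hbound (m * n + m + 1)
  omega
end

section
/- If a voting rule F is Condorcet consistent, then its iterated version under M1 elects the Condorcet winner whenever one exists in the truthful profile. -/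
/-- `c` is the Condorcet winner of profile `p`: for every other candidate `a`,
a strict majority of the `n` voters rank `c` above `a`. -/
def CondorcetWinner {n m : ℕ} (p : Profile n m) (c : Fin m) : Prop :=
  ∀ a : Fin m, a ≠ c → n < 2 * numPrefer p c a

/-- A voting rule is Condorcet consistent if it elects the Condorcet winner
whenever one exists. -/
def CondorcetConsistent {n m : ℕ} (F : Profile n m → Fin m) : Prop :=
  ∀ (p : Profile n m) (c : Fin m), CondorcetWinner p c → F p = c

lemma moveToTop_pres {m : ℕ} (b : Ballot m) (s c a : Fin m) (h : b s < b c) :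
    Prefers (moveToTop b s) c a ↔ Prefers b c a := by
  cases m with
  | zero => exact (b c).elim0
  | succ m =>
    simp only [moveToTop, Prefers, Equiv.trans_apply]
    rw [Fin.cycleRange_of_gt h]
    rcases lt_or_ge (b s) (b a) with h2 | h2
    · rw [Fin.cycleRange_of_gt h2]
    · have h3 : (Fin.cycleRange (b s) (b a) : ℕ) ≤ (b s : ℕ) := by
        rw [Fin.coe_cycleRange_of_le h2]
        split_ifs with he
        · omega
        · have hne : ((b a : ℕ)) ≠ (b s : ℕ) := fun hh => he (Fin.ext hh)
          have := Fin.le_def.mp h2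
          omega
      have h4 := Fin.lt_def.mp h
      have h5 := Fin.le_def.mp h2
      have h6 : ¬ (b c < Fin.cycleRange (b s) (b a)) := by
        rw [Fin.lt_def]; omega
      have h7 : ¬ (b c < b a) := by
        rw [Fin.lt_def]; omega
      exact iff_of_false h6 h7

/-- If `F` is Condorcet consistent, then its iterated version
under M1 elects the Condorcet winner whenever one exists in the truthful
profile: along any M1 iteration starting from the truthful profile, the
outcome at every step (in particular after convergence) is the Condorcet
winner `c`. -/
theorem m1_preserves_condorcet_consistency {n m : ℕ} (hm : 2 ≤ m)
    (F : Profile n m → Fin m) (hF : CondorcetConsistent F)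
    (truthful : Profile n m) (c : Fin m) (hc : CondorcetWinner truthful c)
    (p : ℕ → Profile n m) (h0 : p 0 = truthful)
    (hstep : ∀ k, p (k+1) = p k ∨ ∃ i, M1Move hm F truthful (p k) (p (k+1)) i) :
    ∀ k, F (p k) = c := by
  have key : ∀ k, CondorcetWinner (p k) c := by
    intro k
    induction k with
    | zero => rw [h0]; exact hc
    | succ k ih =>
      rcases hstep k with heq | ⟨i, h1, h2, h3, h4, _, _⟩
      · rw [heq]; exact ih
      · have hw : F (p k) = c := hF _ _ ih
        rw [hw] at h2 h3
        have hb : p k i = truthful i := h1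
        have hlt : (truthful i) (secondCand hm (truthful i)) < (truthful i) c := by
          have ht : (truthful i) c ≠ ⟨0, by omega⟩ := by
            intro hh
            exact h2 (by rw [topCand, ← hh, Equiv.symm_apply_apply])
          have hs : (truthful i) c ≠ ⟨1, by omega⟩ := by
            intro hh
            exact h3 (by rw [secondCand, ← hh, Equiv.symm_apply_apply])
          have h1v : ((truthful i) (secondCand hm (truthful i)) : ℕ) = 1 := by
            rw [secondCand, Equiv.apply_symm_apply]
          have htv : ((truthful i) c : ℕ) ≠ 0 := fun hh => ht (Fin.ext hh)
          have hsv : ((truthful i) c : ℕ) ≠ 1 := fun hh => hs (Fin.ext hh)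
          rw [Fin.lt_def, h1v]
          omega
        intro a ha
        have hnum : numPrefer (p (k+1)) c a = numPrefer (p k) c a := by
          unfold numPrefer
          congr 1
          apply Finset.filter_congr
          intro j _
          rw [h4]
          by_cases hj : j = i
          · rw [hj, Function.update_self, hb]
            exact moveToTop_pres (truthful i) _ c a hlt
          · rw [Function.update_of_ne hj]
        rw [hnum]
        exact ih a ha
  exact fun k => hF _ _ (key k)
end

section
/- Under a positional scoring rule, an M2 manipulation move never decreases the score of the candidate moved to the top and never changes the score of the current winner; therefore the sequence of pairs (score of current winner, tie-breaking rank of current winner) is strictly increasing in lexicographic order along any M2 iteration. -/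
/-- Under a positional scoring rule, an M2 manipulation move
(moving a candidate `c` ranked above the current winner `w = F p` in the
manipulator's ballot to the top, performed only if this changes the winner)
never decreases the score of the moved candidate `c` and never changes the
score of the current winner; therefore the pair (score of current winner,
tie-breaking rank of current winner) strictly increases in lexicographic order
along any M2 iteration. -/
theorem psr_m2_lex_increase {n m : ℕ} (s : Fin m → ℕ) (hs : Antitone s)
    (F : Profile n m → Fin m) (hF : ∀ q, PSRWinner s q (F q))
    (p p' : Profile n m) (i : Fin n) (c : Fin m)
    (hc : Prefers (p i) c (F p))
    (hp' : p' = Function.update p i (moveToTop (p i) c))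
    (hchange : F p' ≠ F p) :
    score s p c ≤ score s p' c ∧
    score s p' (F p) = score s p (F p) ∧
    (score s p (F p) < score s p' (F p') ∨
      (score s p (F p) = score s p' (F p') ∧ F p < F p')) := by
  cases m with
  | zero => exact c.elim0
  | succ m =>
    subst hp'
    set w := F p with hw
    have hb : ∀ j, (Function.update p i (moveToTop (p i) c)) j w = p j w := by
      intro j
      rcases eq_or_ne j i with rfl | h
      · simp [moveToTop, Equiv.trans_apply, Fin.cycleRange_of_gt hc]
      · simp [Function.update_of_ne h]
    have hscorew : score s (Function.update p i (moveToTop (p i) c)) w = score s p w :=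
      Finset.sum_congr rfl (fun j _ => by rw [hb j])
    have hscorec : score s p c ≤ score s (Function.update p i (moveToTop (p i) c)) c := by
      apply Finset.sum_le_sum
      intro j _
      rcases eq_or_ne j i with rfl | h
      · simp only [Function.update_self, moveToTop, Equiv.trans_apply, Fin.cycleRange_self]
        exact hs (Fin.zero_le _)
      · simp [Function.update_of_ne h]
    refine ⟨hscorec, hscorew, ?_⟩
    rcases hF (Function.update p i (moveToTop (p i) c)) w with h | ⟨heq, hle⟩
    · left; rw [← hscorew]; exact h
    · right
      exact ⟨by rw [← hscorew, heq], lt_of_le_of_ne hle (Ne.symm hchange)⟩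
end

section
/- If the turn function is anonymous and the voting rule F is anonymous, then the iterated rule F^M2 is anonymous: permuting the voters in the initial truthful profile yields the same winner after convergence. -/
/-- A voting rule is anonymous if its outcome is invariant under any
permutation of the voters' ballots. -/
def Anonymous {n m : ℕ} (F : Profile n m → Fin m) : Prop :=
  ∀ (p : Profile n m) (σ : Equiv.Perm (Fin n)), F (fun i => p (σ i)) = F p

lemma updPerm {n m : ℕ} (σ : Equiv.Perm (Fin n)) (q : Profile n m) (i : Fin n)
    (b : Ballot m) :
    Function.update (fun j => q (σ j)) (σ.symm i) b =
      fun j => Function.update q i b (σ j) := by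
  funext j
  by_cases h : σ j = i
  · have hj : j = σ.symm i := by
      rw [← h]; simp
    subst hj
    rw [Equiv.apply_symm_apply]
    simp
  · have hj : j ≠ σ.symm i := by
      intro hc; apply h; rw [hc]; simp
    simp [Function.update_of_ne hj, Function.update_of_ne h]

lemma m2Perm {n m : ℕ} (F : Profile n m → Fin m) (hF : Anonymous F)
    (σ : Equiv.Perm (Fin n)) (t q q' : Profile n m) (i : Fin n)
    (h : M2Move F t q q' i) :
    M2Move F (fun j => t (σ j)) (fun j => q (σ j)) (fun j => q' (σ j))
      (σ.symm i) := by
  obtain ⟨c, h1, h2, h3, h4, h5⟩ := h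
  have hq : F (fun j => q (σ j)) = F q := hF q σ
  have hqi : (fun j => q (σ j)) (σ.symm i) = q i := by simp
  have hti : (fun j => t (σ j)) (σ.symm i) = t i := by simp
  refine ⟨c, ?_, ?_, ?_, ?_, ?_⟩
  · rw [hq, hqi]; exact h1
  · rw [hq, hti]; exact h2
  · rw [hqi, updPerm σ q i (moveToTop (q i) c), h3]
  · rw [hF q' σ]; exact h4
  · intro c' hc1 hc2 hc3
    rw [hq, hqi] at hc1
    rw [hq, hti] at hc2
    rw [hti]
    rw [hqi, updPerm σ q i (moveToTop (q i) c'),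
      hF (Function.update q i (moveToTop (q i) c')) σ] at hc3
    exact h5 c' hc1 hc2 hc3

/-- If the voting rule `F` is anonymous and the turn function is
anonymous (in the `σ`-permuted run, the voter selected at each step is the
`σ`-image of the voter selected in the original run), then the iterated rule
`F^M2` is anonymous: given a converged M2 run from the truthful profile `p 0`,
the `σ`-permuted run is a legal M2 run from the permuted truthful profile, it
is converged after the same number of steps, and it yields the same winner. -/
theorem m2_iteration_anonymous {n m : ℕ}
    (F : Profile n m → Fin m) (hF : Anonymous F)
    (σ : Equiv.Perm (Fin n))
    (K : ℕ) (p : ℕ → Profile n m) (mover : ℕ → Fin n)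
    (hstep : ∀ k, k < K → M2Move F (p 0) (p k) (p (k+1)) (mover k))
    (hconv : ∀ (p' : Profile n m) (i : Fin n), ¬ M2Move F (p 0) (p K) p' i) :
    (∀ k, k < K →
      M2Move F (fun i => p 0 (σ i)) (fun i => p k (σ i)) (fun i => p (k+1) (σ i))
        (σ.symm (mover k))) ∧
    (∀ (q' : Profile n m) (i : Fin n),
      ¬ M2Move F (fun i => p 0 (σ i)) (fun i => p K (σ i)) q' i) ∧
    F (fun i => p K (σ i)) = F (p K) := by
  refine ⟨fun k hk => m2Perm F hF σ _ _ _ _ (hstep k hk), ?_, hF (p K) σ⟩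
  intro q' i h
  have h2 := m2Perm F hF σ.symm _ _ q' i h
  have e0 : (fun j => (fun i => p 0 (σ i)) (σ.symm j)) = p 0 := by
    funext j; simp
  have eK : (fun j => (fun i => p K (σ i)) (σ.symm j)) = p K := by
    funext j; simp
  rw [e0, eK] at h2
  simp only [Equiv.symm_symm] at h2
  exact hconv _ _ h2
end

section
/- For the k-pragmatist manipulation restriction under any positional scoring rule, each voter manipulates at most once, so the iterative process converges after at most n steps. -/
/-- `T` is the set of the `k` candidates currently scoring in the top `k`
positions of profile `p` under the positional scoring rule with vector `s`
(ties broken by the natural order on `Fin m`). -/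
def TopKSet {n m : ℕ} (s : Fin m → ℕ) (p : Profile n m) (k : ℕ)
    (T : Finset (Fin m)) : Prop :=
  T.card = k ∧ ∀ c ∈ T, ∀ c' ∉ T,
    score s p c' < score s p c ∨ (score s p c' = score s p c ∧ c' < c)

/-- A k-pragmatist manipulation move by voter `i`: she moves to the top of her
reported ballot her truthfully most preferred candidate `c` among the `k`
candidates currently scoring in the top `k` positions, and does so only if `c`
is not already at the top of her ballot. -/
def PragmatistMove {n m : ℕ} (hm : 0 < m) (k : ℕ) (s : Fin m → ℕ)
    (truthful p p' : Profile n m) (i : Fin n) : Prop :=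
  ∃ (T : Finset (Fin m)) (c : Fin m),
    TopKSet s p k T ∧ c ∈ T ∧
    (∀ c' ∈ T, c' ≠ c → Prefers (truthful i) c c') ∧
    c ≠ topCand hm (p i) ∧
    p' = Function.update p i (moveToTop (p i) c)

-- helper lemmas
lemma moveToTop_apply_self {m : ℕ} (b : Ballot m) (c : Fin m) (hm : 0 < m) :
    moveToTop b c c = ⟨0, hm⟩ := by
  obtain ⟨m', rfl⟩ : ∃ m', m = m' + 1 := ⟨m - 1, by omega⟩
  simp [moveToTop, Fin.cycleRange_self]

lemma topCand_moveToTop {m : ℕ} (hm : 0 < m) (b : Ballot m) (c : Fin m) :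
    topCand hm (moveToTop b c) = c := by
  rw [topCand, Equiv.symm_apply_eq, moveToTop_apply_self b c hm]

lemma le_moveToTop_apply {m : ℕ} (b : Ballot m) (c d : Fin m) (h : d ≠ c) :
    b d ≤ moveToTop b c d := by
  obtain ⟨m', rfl⟩ : ∃ m', m = m' + 1 := ⟨m - 1, by have := c.pos; omega⟩
  have hne : b d ≠ b c := fun he => h (b.injective he)
  rcases lt_or_gt_of_ne hne with hlt | hgt
  · have : moveToTop b c d = b d + 1 := by
      simp [moveToTop, Fin.cycleRange_of_lt hlt]
    rw [this, Fin.le_def, Fin.val_add_one]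
    have : (b d : ℕ) < b c := hlt
    have hcv : (b c : ℕ) < m' + 1 := (b c).isLt
    rw [if_neg]
    · omega
    · intro hlast
      rw [hlast] at hlt
      exact absurd hlt (Fin.le_last _).not_gt
  · have : moveToTop b c d = b d := by
      simp [moveToTop, Fin.cycleRange_of_gt hgt]
    rw [this]

lemma moveToTop_apply_of_gt {m : ℕ} (b : Ballot m) (c d : Fin m) (h : b c < b d) :
    moveToTop b c d = b d := by
  obtain ⟨m', rfl⟩ : ∃ m', m = m' + 1 := ⟨m - 1, by have := c.pos; omega⟩
  simp [moveToTop, Fin.cycleRange_of_gt h]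

lemma score_update_le {n m : ℕ} (s : Fin m → ℕ) (p : Profile n m) (i : Fin n)
    (b' : Ballot m) (e : Fin m) (h : s (b' e) ≤ s (p i e)) :
    score s (Function.update p i b') e ≤ score s p e := by
  apply Finset.sum_le_sum
  intro i' _
  rcases eq_or_ne i' i with rfl | hne
  · simpa using h
  · rw [Function.update_of_ne hne]

lemma score_update_ge {n m : ℕ} (s : Fin m → ℕ) (p : Profile n m) (i : Fin n)
    (b' : Ballot m) (e : Fin m) (h : s (p i e) ≤ s (b' e)) :
    score s p e ≤ score s (Function.update p i b') e := by
  apply Finset.sum_le_sum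
  intro i' _
  rcases eq_or_ne i' i with rfl | hne
  · simpa using h
  · rw [Function.update_of_ne hne]

lemma topKSet_unique {n m k : ℕ} {s : Fin m → ℕ} {p : Profile n m}
    {T T' : Finset (Fin m)} (hT : TopKSet s p k T) (hT' : TopKSet s p k T') :
    T = T' := by
  by_contra hne
  have h1 : ¬ T ⊆ T' := fun hsub =>
    hne (Finset.eq_of_subset_of_card_le hsub (hT'.1.trans hT.1.symm).le)
  have h2 : ¬ T' ⊆ T := fun hsub =>
    (hne (Finset.eq_of_subset_of_card_le hsub (hT.1.trans hT'.1.symm).le).symm)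
  obtain ⟨a, haT, haT'⟩ := Finset.not_subset.mp h1
  obtain ⟨b, hbT', hbT⟩ := Finset.not_subset.mp h2
  have hab := hT.2 a haT b hbT
  have hba := hT'.2 b hbT' a haT'
  rcases hab with h | ⟨h, hlt⟩ <;> rcases hba with h' | ⟨h', hlt'⟩
  · omega
  · omega
  · omega
  · exact absurd hlt' hlt.asymm

lemma topKSet_preserve {n m k : ℕ} {s : Fin m → ℕ} {p p' : Profile n m}
    {T : Finset (Fin m)} (hT : TopKSet s p k T)
    (hup : ∀ d ∈ T, score s p d ≤ score s p' d)
    (hdown : ∀ e ∉ T, score s p' e ≤ score s p e) :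
    TopKSet s p' k T := by
  refine ⟨hT.1, fun d hd e he => ?_⟩
  have h1 := hup d hd
  have h2 := hdown e he
  rcases hT.2 d hd e he with h | ⟨h, hlt⟩
  · left; omega
  · rcases lt_or_eq_of_le (h2.trans (h.le.trans h1)) with h' | h'
    · left; exact h'
    · right; exact ⟨h', hlt⟩

lemma best_unique {m : ℕ} {b : Ballot m} {T : Finset (Fin m)} {c c' : Fin m}
    (hc : c ∈ T) (hc' : c' ∈ T)
    (hb : ∀ d ∈ T, d ≠ c → Prefers b c d)
    (hb' : ∀ d ∈ T, d ≠ c' → Prefers b c' d) : c = c' := by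
  by_contra hne
  exact absurd (hb' c hc hne) (hb c' hc' (Ne.symm hne)).asymm


/-- For the k-pragmatist manipulation restriction under any
positional scoring rule, each voter manipulates at most once, so the iterative
process converges after at most `n` steps. -/
theorem pragmatist_converges_in_n_steps {n m k : ℕ} (hm : 0 < m)
    (s : Fin m → ℕ) (hs : Antitone s)
    (truthful : Profile n m) (K : ℕ) (p : ℕ → Profile n m) (mover : ℕ → Fin n)
    (h0 : p 0 = truthful)
    (hstep : ∀ j, j < K → PragmatistMove hm k s truthful (p j) (p (j+1)) (mover j)) :
    (∀ i : Fin n, ((Finset.range K).filter (fun j => mover j = i)).card ≤ 1) ∧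
    K ≤ n := by
  rcases Nat.eq_zero_or_pos K with rfl | hK0
  · simp
  obtain ⟨T₀, c₀, hT₀, -⟩ := hstep 0 hK0
  -- main invariant
  have key : ∀ j, j ≤ K → TopKSet s (p j) k T₀ ∧ ∀ i : Fin n,
      ((∀ j' < j, mover j' ≠ i) ∧ p j i = truthful i) ∨
      (∃ c ∈ T₀, (∀ c' ∈ T₀, c' ≠ c → Prefers (truthful i) c c') ∧
        topCand hm (p j i) = c) := by
    intro j
    induction j with
    | zero =>
      intro _
      refine ⟨hT₀, fun i => Or.inl ⟨fun j' hj' => absurd hj' (Nat.not_lt_zero _), ?_⟩⟩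
      rw [h0]
    | succ j ih =>
      intro hjK
      have hjK' : j < K := hjK
      obtain ⟨hTj, hvoters⟩ := ih hjK'.le
      obtain ⟨T, c, hT, hcT, hbest, hne, hupd⟩ := hstep j hjK'
      have hTT : T = T₀ := topKSet_unique hT hTj
      subst hTT
      set i := mover j with hi
      have htruth : p j i = truthful i := by
        rcases hvoters i with ⟨-, h⟩ | ⟨ci, hciT, hbi, htop⟩
        · exact h
        · exact absurd (best_unique hcT hciT hbest hbi) (htop ▸ hne)
      have hb'c : moveToTop (p j i) c c = ⟨0, hm⟩ := moveToTop_apply_self _ _ hm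
      constructor
      · -- top-k set preserved
        rw [hupd]
        apply topKSet_preserve hTj
        · intro d hd
          apply score_update_ge
          rcases eq_or_ne d c with rfl | hdc
          · rw [hb'c]
            exact hs (Fin.mk_le_of_le_val (Nat.zero_le _))
          · have hpref : Prefers (truthful i) c d := hbest d hd hdc
            rw [moveToTop_apply_of_gt (p j i) c d (htruth ▸ hpref)]
        · intro e he
          apply score_update_le
          exact hs (le_moveToTop_apply (p j i) c e (fun h => he (h ▸ hcT)))
      · intro i'
        rcases eq_or_ne i' i with rfl | hii
        · refine Or.inr ⟨c, hcT, hbest, ?_⟩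
          rw [hupd, Function.update_self, topCand_moveToTop]
        · have hsame : p (j+1) i' = p j i' := by
            rw [hupd, Function.update_of_ne hii]
          rcases hvoters i' with ⟨hnm, h⟩ | ⟨ci, hciT, hbi, htop⟩
          · refine Or.inl ⟨fun j' hj' => ?_, hsame.trans h⟩
            rcases Nat.lt_succ_iff_lt_or_eq.mp hj' with h' | rfl
            · exact hnm j' h'
            · exact fun h => hii (h ▸ rfl)
          · exact Or.inr ⟨ci, hciT, hbi, hsame ▸ htop⟩
  -- no voter moves twice
  have hinj : ∀ j1 j2, j1 < K → j2 < K → mover j1 = mover j2 → j1 = j2 := by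
    have main : ∀ j1 j2, j1 < j2 → j2 < K → mover j1 ≠ mover j2 := by
      intro j1 j2 h12 h2K heq
      obtain ⟨hTj, hvoters⟩ := key j2 h2K.le
      obtain ⟨T, c, hT, hcT, hbest, hne, hupd⟩ := hstep j2 h2K
      have hTT : T = T₀ := topKSet_unique hT hTj
      subst hTT
      rcases hvoters (mover j2) with ⟨hnm, -⟩ | ⟨ci, hciT, hbi, htop⟩
      · exact hnm j1 h12 heq
      · exact absurd (best_unique hcT hciT hbest hbi) (htop ▸ hne)
    intro j1 j2 h1 h2 heq
    rcases lt_trichotomy j1 j2 with h | h | h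
    · exact absurd heq (main j1 j2 h h2)
    · exact h
    · exact absurd heq.symm (main j2 j1 h h1)
  constructor
  · intro i
    apply Finset.card_le_one.mpr
    intro a ha b hb
    simp only [Finset.mem_filter, Finset.mem_range] at ha hb
    exact hinj a b ha.1 hb.1 (ha.2.trans hb.2.symm)
  · have h := Finset.card_le_card_of_injOn mover
      (fun j _ => Finset.mem_univ (mover j))
      (fun j1 h1 j2 h2 heq =>
        hinj j1 j2 (Finset.mem_range.mp h1) (Finset.mem_range.mp h2) heq)
    simpa using h
end

section
/- If all voters' ballots remain unchanged except that M2 moves are applied, and the truthful profile has Condorcet winner c which is elected at every step by a Condorcet-consistent rule F, then at no step does any voter have an available M2 move; that is, iteration of a Condorcet-consistent rule under M2 terminates at step 0 when the truthful profile has a Condorcet winner. -/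
lemma cycleRange_lt_iff_of_lt {N : ℕ} (k x y : Fin (N + 1)) (hy : k < y) :
    (k.cycleRange x < k.cycleRange y ↔ x < y) ∧
      (k.cycleRange y < k.cycleRange x ↔ y < x) := by
  rw [Fin.cycleRange_of_gt hy]
  rcases le_or_gt x k with h | h
  · by_cases hxe : x = k
    · subst hxe
      rw [Fin.cycleRange_self]
      constructor <;> rw [Fin.lt_def, Fin.lt_def] <;>
        · simp only [Fin.val_zero]
          have := (Fin.lt_def).mp hy
          omega
    · have hlt : x < k := lt_of_le_of_ne h hxe
      have hv := Fin.coe_cycleRange_of_lt hlt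
      have hy' := (Fin.lt_def).mp hy
      have hx' := (Fin.lt_def).mp hlt
      constructor <;> rw [Fin.lt_def, Fin.lt_def] <;> rw [hv] <;> omega
  · rw [Fin.cycleRange_of_gt h]
    exact ⟨Iff.rfl, Iff.rfl⟩

lemma moveToTop_prefers_iff {m : ℕ} (b : Ballot m) (a w x : Fin m)
    (h : Prefers b a w) :
    (Prefers (moveToTop b a) w x ↔ Prefers b w x) ∧
      (Prefers (moveToTop b a) x w ↔ Prefers b x w) := by
  obtain ⟨M, rfl⟩ : ∃ M, m = M + 1 := ⟨m - 1, by omega⟩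
  unfold moveToTop Prefers
  simp only [Equiv.trans_apply]
  exact (cycleRange_lt_iff_of_lt (b a) (b x) (b w) h).symm

/-- If `F` is Condorcet consistent and the truthful profile has
a Condorcet winner `c`, then `F` elects `c` and no voter has an available M2
move at the truthful profile; that is, iteration of a Condorcet-consistent
rule under M2 terminates at step 0 when the truthful profile has a Condorcet
winner. -/
theorem condorcet_consistent_m2_terminates_at_step_zero {n m : ℕ}
    (F : Profile n m → Fin m) (hF : CondorcetConsistent F)
    (truthful : Profile n m) (c : Fin m) (hc : CondorcetWinner truthful c) :
    F truthful = c ∧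
      ∀ (p' : Profile n m) (i : Fin n), ¬ M2Move F truthful truthful p' i := by
  have hFt : F truthful = c := hF truthful c hc
  refine ⟨hFt, ?_⟩
  rintro p' i ⟨a, ha1, ha2, hp', hFa, -⟩
  rw [hFt] at ha1 ha2
  -- c remains the Condorcet winner of p'
  have hnum : ∀ x : Fin m, numPrefer p' c x = numPrefer truthful c x := by
    intro x
    unfold numPrefer
    congr 1
    apply Finset.filter_congr
    intro j _
    subst hp'
    by_cases hj : j = i
    · subst hj
      simp only [Function.update_self]
      exact (moveToTop_prefers_iff (truthful j) a c x ha1).1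
    · simp [Function.update_of_ne hj]
  have hcw' : CondorcetWinner p' c := by
    intro x hx
    rw [hnum x]
    exact hc x hx
  have : a = c := by rw [← hFa, hF p' c hcw']
  subst this
  exact lt_irrefl _ ha1
end
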